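/- Let v ∈ ℝⁿ satisfy 0 < ‖v‖ < 1 for the Euclidean norm, and let F be the Minkowski functional (gauge) of K = v + B̄(0,1), the translate by v of the closed Euclidean unit ball. Then F(v) = ‖v‖/(1+‖v‖) and F(−v) = ‖v‖/(1−‖v‖); in particular F(−v) ≠ F(v), so F is not the norm of any inner product on ℝⁿ. -/

import Mathlib

open scoped Pointwise

noncomputable section

/-! The set `K = v + B̄(0,1)` is the closed unit ball centred at `v`, so `t • K` is the closed
ball of radius `t` about `t • v`. On the line through `v` this gives
`s • v ∈ t • K ↔ |s - t| ‖v‖ ≤ t`, and the least such `t` is `‖v‖/(1+‖v‖)` for `s = 1` and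
`‖v‖/(1-‖v‖)` for `s = -1`: the origin is not the centre of `K`, so its gauge is not even,
whereas `ξ ↦ √(g ξ ξ)` is even for every bilinear form `g`. -/

theorem gauge_eq_of_forall_mem_smul_iff {E : Type*} [AddCommGroup E] [Module ℝ E] {s : Set E}
    {x : E} {a : ℝ} (ha : 0 < a) (h : ∀ t, 0 < t → (x ∈ t • s ↔ a ≤ t)) :
    gauge s x = a := by
  have hset : {t : ℝ | 0 < t ∧ x ∈ t • s} = Set.Ici a := by
    ext t
    exact ⟨fun ⟨ht, hx⟩ => (h t ht).1 hx,
      fun hat => ⟨ha.trans_le hat, (h t (ha.trans_le hat)).2 hat⟩⟩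
  rw [gauge, hset, csInf_Ici]

section NormedSpace

variable {E : Type*} [SeminormedAddCommGroup E] [NormedSpace ℝ E]

theorem mem_smul_closedBall_one_iff {v y : E} {t : ℝ} (ht : 0 < t) :
    y ∈ t • Metric.closedBall v 1 ↔ ‖y - t • v‖ ≤ t := by
  rw [smul_closedBall' ht.ne' v 1, Metric.mem_closedBall, dist_eq_norm,
    Real.norm_of_nonneg ht.le, mul_one]

theorem gauge_closedBall_one_self {v : E} (hv0 : 0 < ‖v‖) (hv : ‖v‖ ≤ 1) :
    gauge (Metric.closedBall v 1) v = ‖v‖ / (1 + ‖v‖) := by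
  refine gauge_eq_of_forall_mem_smul_iff (by positivity) fun t ht => ?_
  rw [mem_smul_closedBall_one_iff ht, show v - t • v = (1 - t) • v by module, norm_smul,
    Real.norm_eq_abs, div_le_iff₀ (by positivity)]
  rcases abs_cases (1 - t) with ⟨habs, hsign⟩ | ⟨habs, hsign⟩ <;> rw [habs] <;>
    constructor <;> intro <;> nlinarith

theorem gauge_closedBall_one_neg_self {v : E} (hv0 : 0 < ‖v‖) (hv : ‖v‖ < 1) :
    gauge (Metric.closedBall v 1) (-v) = ‖v‖ / (1 - ‖v‖) := by
  refine gauge_eq_of_forall_mem_smul_iff (div_pos hv0 (sub_pos.2 hv)) fun t ht => ?_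
  rw [mem_smul_closedBall_one_iff ht, show -v - t • v = -((1 + t) • v) by module, norm_neg,
    norm_smul, Real.norm_of_nonneg (by positivity), div_le_iff₀ (sub_pos.2 hv)]
  constructor <;> intro <;> nlinarith

end NormedSpace

/-- for `0 < ‖v‖ < 1`, the gauge `F` of the translated ball `v + B̄(0,1)`
satisfies `F(v) = ‖v‖/(1+‖v‖)` and `F(−v) = ‖v‖/(1−‖v‖)`; in particular `F(−v) ≠ F(v)`,
so `F` is not the norm of any inner product on ℝⁿ. -/
theorem gauge_translated_ball_irreversible
    (n : ℕ) (v : EuclideanSpace ℝ (Fin n)) (hv0 : 0 < ‖v‖) (hv : ‖v‖ < 1) :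
    let F : EuclideanSpace ℝ (Fin n) → ℝ :=
      gauge (v +ᵥ Metric.closedBall (0 : EuclideanSpace ℝ (Fin n)) 1)
    F v = ‖v‖ / (1 + ‖v‖) ∧
    F (-v) = ‖v‖ / (1 - ‖v‖) ∧
    F (-v) ≠ F v ∧
    ¬ ∃ g : EuclideanSpace ℝ (Fin n) →ₗ[ℝ] EuclideanSpace ℝ (Fin n) →ₗ[ℝ] ℝ,
        (∀ x y, g x y = g y x) ∧ (∀ x, x ≠ 0 → 0 < g x x) ∧
        ∀ ξ, F ξ = Real.sqrt (g ξ ξ) := by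
  intro F
  have hK : v +ᵥ Metric.closedBall (0 : EuclideanSpace ℝ (Fin n)) 1 = Metric.closedBall v 1 := by
    rw [Metric.vadd_closedBall, vadd_eq_add, add_zero]
  have hFv : F v = ‖v‖ / (1 + ‖v‖) := by
    simpa only [F, hK] using gauge_closedBall_one_self hv0 hv.le
  have hFneg : F (-v) = ‖v‖ / (1 - ‖v‖) := by
    simpa only [F, hK] using gauge_closedBall_one_neg_self hv0 hv
  have hne : F (-v) ≠ F v := by
    rw [hFv, hFneg]
    exact (div_lt_div_of_pos_left hv0 (sub_pos.2 hv) (by linarith)).ne'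
  refine ⟨hFv, hFneg, hne, ?_⟩
  rintro ⟨g, -, -, hF⟩
  exact hne (by rw [hF, hF, LinearMap.map_neg₂, map_neg, neg_neg])
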